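/- Consider the PDS method run for all k ∈ ℕ, under the saddle-point assumption, with T⁽ᵏ⁾ ≠ 0 for all k and the chosen subgradient selections bounded in norm on every bounded subset of ℝⁿ. For each k ≥ 1 let i_k be any index in argmin_{1 ≤ i ≤ k} ⟨T⁽ⁱ⁾, z⁽ⁱ⁾ − z*⟩. Then there exists W > 0 such that for all k ≥ 1: |f₀(x^{(i_k)}) − p*| ≤ W·(k+1)^{−δ/(2s)} and ‖F(x^{(i_k)})‖₂ + ‖A x^{(i_k)} − b‖₂ ≤ W·(k+1)^{−δ/(2s)}; in particular |f₀(x^{(i_k)}) − p*| → 0 and ‖F(x^{(i_k)})‖₂ + ‖A x^{(i_k)} − b‖₂ → 0 as k → ∞. -/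

import Mathlib

open scoped RealInnerProductSpace Classical
open Matrix

/-- `A x` for `A` an `l × n` real matrix and `x ∈ ℝⁿ`, as Euclidean spaces. -/
noncomputable def mulVecE {l n : ℕ} (A : Matrix (Fin l) (Fin n) ℝ)
    (x : EuclideanSpace ℝ (Fin n)) : EuclideanSpace ℝ (Fin l) :=
  Matrix.toEuclideanLin A x

/-- `F(x) = (max{f₁(x),0}, …, max{f_m(x),0})`. -/
noncomputable def Fplus {n m : ℕ} (f : Fin m → EuclideanSpace ℝ (Fin n) → ℝ)
    (x : EuclideanSpace ℝ (Fin n)) : EuclideanSpace ℝ (Fin m) :=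
  (WithLp.equiv 2 (Fin m → ℝ)).symm fun i => max (f i x) 0

/-- The Lagrangian `L(x, λ, ν) = f₀(x) + λᵀF(x) + νᵀ(Ax - b)`. -/
noncomputable def Lag {n m l : ℕ} (f0 : EuclideanSpace ℝ (Fin n) → ℝ)
    (f : Fin m → EuclideanSpace ℝ (Fin n) → ℝ)
    (A : Matrix (Fin l) (Fin n) ℝ) (b : EuclideanSpace ℝ (Fin l))
    (x : EuclideanSpace ℝ (Fin n)) (lam : EuclideanSpace ℝ (Fin m))
    (nu : EuclideanSpace ℝ (Fin l)) : ℝ :=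
  f0 x + ⟪lam, Fplus f x⟫ + ⟪nu, mulVecE A x - b⟫

/-!
Write `z = (x, λ, ν)`, `D_k = ‖z⁽ᵏ⁾ - z*‖²` and `a_k = ⟨T⁽ᵏ⁾, z⁽ᵏ⁾ - z*⟩`. Since
`α_k ‖T⁽ᵏ⁾‖ = γ_k`, the update gives exactly `D_{k+1} = D_k - 2 α_k a_k + γ_k²`. The subgradient
inequalities at `x*` give `a_k ≥ L(x⁽ᵏ⁾, λ*, ν*) - p* + ρ s (‖F⁽ᵏ⁾‖^s + ‖A x⁽ᵏ⁾ - b‖^s)`, which is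
nonnegative by the saddle-point property. As `∑ γ_k² < ∞` (this is where `δ < 1` enters),
telescoping keeps the iterates in a fixed ball, on which the subgradients, hence `‖T⁽ᵏ⁾‖`, are
bounded by some `T̄`; so `α_k ≥ γ_k / T̄`, and the telescoped sum bounds the minimum `a_{i_k}` by
`T̄ (D_0 + ∑ γ²) / (2 ∑_{i=1}^k γ_i) = O((k+1)^{-δ/2})`. The penalty term turns this into
`‖F‖, ‖A x - b‖ = O((k+1)^{-δ/(2s)})`, and the Lagrangian gap, corrected by
`⟨λ*, F⟩ + ⟨ν*, A x - b⟩` via Cauchy–Schwarz, gives the same rate for `|f₀ - p*|`.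
-/

open Finset Filter

lemma norm_sq_add_norm_sq_add_norm_sq_pos {E F G : Type*} [NormedAddCommGroup E]
    [NormedAddCommGroup F] [NormedAddCommGroup G] {x : E} {y : F} {z : G}
    (h : ¬(x = 0 ∧ y = 0 ∧ z = 0)) : 0 < ‖x‖ ^ 2 + ‖y‖ ^ 2 + ‖z‖ ^ 2 := by
  by_contra! hle
  have hx := sq_nonneg ‖x‖
  have hy := sq_nonneg ‖y‖
  have hz := sq_nonneg ‖z‖
  refine h ⟨?_, ?_, ?_⟩ <;> refine norm_eq_zero.1 (pow_eq_zero_iff two_ne_zero |>.1 ?_) <;> linarith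

lemma le_sqrt_of_sq_add_sq_add_sq_le {a b c B : ℝ} (h : a ^ 2 + b ^ 2 + c ^ 2 ≤ B) :
    a ≤ √B ∧ b ≤ √B ∧ c ≤ √B := by
  have ha := sq_nonneg a
  have hb := sq_nonneg b
  have hc := sq_nonneg c
  refine ⟨?_, ?_, ?_⟩ <;> refine Real.le_sqrt_of_sq_le ?_ <;> linarith

lemma sqrt_sq_add_sq_add_sq_le_add {a b c : ℝ} (ha : 0 ≤ a) (hb : 0 ≤ b) (hc : 0 ≤ c) :
    √(a ^ 2 + b ^ 2 + c ^ 2) ≤ a + b + c :=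
  Real.sqrt_le_iff.2
    ⟨by positivity, by nlinarith [mul_nonneg ha hb, mul_nonneg hb hc, mul_nonneg ha hc]⟩

lemma Real.rpow_le_max_one_self {t p : ℝ} (ht : 0 ≤ t) (hp0 : 0 ≤ p) (hp1 : p ≤ 1) :
    t ^ p ≤ max 1 t := by
  rcases le_total t 1 with h | h
  · exact (Real.rpow_le_one ht h hp0).trans (le_max_left _ _)
  · calc t ^ p ≤ t ^ (1 : ℝ) := Real.rpow_le_rpow_of_exponent_le h hp1
      _ = t := Real.rpow_one t
      _ ≤ max 1 t := le_max_right _ _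

lemma le_mul_rpow_neg_of_rpow_le {t c r e s : ℝ} (ht : 0 ≤ t) (hc : 0 ≤ c) (hr : 0 ≤ r)
    (hs : 0 < s) (h : t ^ s ≤ c * r ^ (-e)) : t ≤ c ^ s⁻¹ * r ^ (-(e / s)) := by
  rw [div_eq_mul_inv, ← neg_mul, Real.rpow_mul hr, ← Real.mul_rpow hc (by positivity)]
  exact (Real.le_rpow_inv_iff_of_pos ht (by positivity) hs).2 h

section InnerProductSpace

variable {E : Type*} [NormedAddCommGroup E] [InnerProductSpace ℝ E]

lemma norm_sub_smul_sub_sq (x t y : E) (a : ℝ) :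
    ‖x - a • t - y‖ ^ 2 = ‖x - y‖ ^ 2 - 2 * a * ⟪t, x - y⟫ + a ^ 2 * ‖t‖ ^ 2 := by
  rw [sub_right_comm, norm_sub_sq_real, real_inner_smul_right, norm_smul, mul_pow,
    Real.norm_eq_abs, sq_abs, real_inner_comm]
  ring

lemma norm_add_smul_sub_sq (x t y : E) (a : ℝ) :
    ‖x + a • t - y‖ ^ 2 = ‖x - y‖ ^ 2 + 2 * a * ⟪t, x - y⟫ + a ^ 2 * ‖t‖ ^ 2 := by
  rw [add_sub_right_comm, norm_add_sq_real, real_inner_smul_right, norm_smul, mul_pow,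
    Real.norm_eq_abs, sq_abs, real_inner_comm]
  ring

lemma sum_mul_sub_le_inner_sum_smul {ι : Type*} [Fintype ι] {φ : ι → E → ℝ} {g : ι → E}
    {c : ι → ℝ} {x y : E} (hc : ∀ i, 0 ≤ c i) (hg : ∀ i, ⟪g i, y - x⟫ ≤ φ i y - φ i x) :
    ∑ i, c i * (φ i x - φ i y) ≤ ⟪∑ i, c i • g i, x - y⟫ := by
  rw [sum_inner]
  refine sum_le_sum fun i _ => ?_
  have hgi : φ i x - φ i y ≤ ⟪g i, x - y⟫ := by
    have := hg i
    rw [← neg_sub, inner_neg_right] at this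
    linarith
  rw [real_inner_smul_left]
  exact mul_le_mul_of_nonneg_left hgi (hc i)

-- `ϱ⁽ᵏ⁾ = gradNormRpow s F⁽ᵏ⁾` and `ς⁽ᵏ⁾ = gradNormRpow s (A x⁽ᵏ⁾ - b)`
noncomputable def gradNormRpow (s : ℝ) (v : E) : E :=
  if v ≠ 0 then (s * ‖v‖ ^ (s - 2)) • v else 0

lemma inner_gradNormRpow_self {s : ℝ} (hs : 0 < s) (v : E) :
    ⟪gradNormRpow s v, v⟫ = s * ‖v‖ ^ s := by
  unfold gradNormRpow
  split_ifs with hv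
  · rw [real_inner_smul_left, real_inner_self_eq_norm_sq, mul_assoc, ← Real.rpow_natCast,
      ← Real.rpow_add (norm_pos_iff.2 hv)]
    norm_num
  · simp [not_not.1 hv, Real.zero_rpow hs.ne']

lemma norm_gradNormRpow_le {s : ℝ} (hs1 : 1 ≤ s) (hs2 : s ≤ 2) (v : E) :
    ‖gradNormRpow s v‖ ≤ s * max 1 ‖v‖ := by
  have hs0 : 0 ≤ s := zero_le_one.trans hs1
  unfold gradNormRpow
  split_ifs with hv
  · have hpow : ‖v‖ ^ (s - 2) * ‖v‖ = ‖v‖ ^ (s - 1) := by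
      rw [← Real.rpow_add_one (norm_ne_zero_iff.2 hv)]
      ring_nf
    rw [norm_smul, Real.norm_of_nonneg (by positivity), mul_assoc, hpow]
    exact mul_le_mul_of_nonneg_left
      (Real.rpow_le_max_one_self (norm_nonneg v) (by linarith) (by linarith)) hs0
  · rw [norm_zero]
    positivity

end InnerProductSpace

section EuclideanSpace

variable {ι : Type*}

lemma EuclideanSpace.norm_le_sum_abs [Fintype ι] (v : EuclideanSpace ℝ ι) :
    ‖v‖ ≤ ∑ i, |v i| := by
  conv_lhs => rw [← (EuclideanSpace.basisFun ι ℝ).sum_repr v]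
  refine (norm_sum_le _ _).trans_eq ?_
  simp [norm_smul]

lemma norm_sum_smul_le [Fintype ι] {E : Type*} [SeminormedAddCommGroup E] [NormedSpace ℝ E]
    (c : EuclideanSpace ℝ ι) {v : ι → E} {M : ℝ} (hv : ∀ i, ‖v i‖ ≤ M) :
    ‖∑ i, c i • v i‖ ≤ Fintype.card ι * (‖c‖ * M) := by
  calc ‖∑ i, c i • v i‖ ≤ ∑ i, ‖c i‖ * ‖v i‖ := (norm_sum_le _ _).trans_eq (by simp [norm_smul])
    _ ≤ ∑ _i : ι, ‖c‖ * M := sum_le_sum fun i _ =>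
        mul_le_mul (PiLp.norm_apply_le c i) (hv i) (norm_nonneg _) (norm_nonneg _)
    _ = Fintype.card ι * (‖c‖ * M) := by simp

lemma gradNormRpow_apply_nonneg [Fintype ι] {s : ℝ} (hs : 0 ≤ s) {v : EuclideanSpace ℝ ι}
    (hv : ∀ i, 0 ≤ v i) (i : ι) : 0 ≤ gradNormRpow s v i := by
  unfold gradNormRpow
  split_ifs
  · simp only [PiLp.smul_apply, smul_eq_mul]
    exact mul_nonneg (by positivity) (hv i)
  · simp

lemma apply_nonneg_of_eq_add_smul {u v : ℕ → EuclideanSpace ℝ ι} {α : ℕ → ℝ}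
    (hu : ∀ k, u (k + 1) = u k + α k • v k) (h0 : ∀ i, 0 ≤ u 0 i) (hα : ∀ k, 0 ≤ α k)
    (hv : ∀ k i, 0 ≤ v k i) (k : ℕ) (i : ι) : 0 ≤ u k i := by
  induction k with
  | zero => exact h0 i
  | succ k ih =>
    rw [hu, PiLp.add_apply, PiLp.smul_apply, smul_eq_mul]
    exact add_nonneg ih (mul_nonneg (hα k) (hv k i))

end EuclideanSpace

section Sequences

lemma add_two_mul_sum_le_add_tsum {D c e : ℕ → ℝ} (hrec : ∀ k, D (k + 1) = D k - 2 * c k + e k)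
    (he0 : ∀ k, 0 ≤ e k) (he : Summable e) (k : ℕ) :
    D k + 2 * ∑ j ∈ range k, c j ≤ D 0 + ∑' j, e j := by
  have htel : D k + 2 * ∑ j ∈ range k, c j = D 0 + ∑ j ∈ range k, e j := by
    induction k with
    | zero => simp
    | succ k ih => rw [sum_range_succ, sum_range_succ, hrec]; linarith
  rw [htel]
  gcongr
  exact he.sum_le_tsum _ fun j _ => he0 j

lemma summable_nat_add_one_rpow {p : ℝ} (hp : p < -1) :
    Summable fun k : ℕ => ((k : ℝ) + 1) ^ p := by
  simpa using (summable_nat_add_iff 1).2 (Real.summable_nat_rpow.2 hp)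

lemma rpow_div_two_le_sum_Icc {e : ℝ} (he : e ≤ 0) {k : ℕ} (hk : 1 ≤ k) :
    ((k : ℝ) + 1) ^ (1 + e) / 2 ≤ ∑ j ∈ Icc 1 k, ((j : ℝ) + 1) ^ e := by
  have hterm : ∀ j ∈ Icc 1 k, ((k : ℝ) + 1) ^ e ≤ ((j : ℝ) + 1) ^ e := fun j hj =>
    Real.rpow_le_rpow_of_nonpos (by positivity)
      (by gcongr; exact_mod_cast (mem_Icc.1 hj).2) he
  have hcard := card_nsmul_le_sum _ _ _ hterm
  rw [Nat.card_Icc, add_tsub_cancel_right, nsmul_eq_mul] at hcard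
  have hk' : (1 : ℝ) ≤ k := Nat.one_le_cast.2 hk
  rw [Real.rpow_add (by positivity), Real.rpow_one]
  nlinarith [Real.rpow_nonneg (by positivity : (0 : ℝ) ≤ k + 1) e]

lemma tendsto_zero_of_le_mul_rpow_neg {u : ℕ → ℝ} {W p : ℝ} (hp : 0 < p) (hu0 : ∀ k, 0 ≤ u k)
    (hu : ∀ k, 1 ≤ k → u k ≤ W * ((k : ℝ) + 1) ^ (-p)) : Tendsto u atTop (nhds 0) := by
  have hlim : Tendsto (fun k : ℕ => W * ((k : ℝ) + 1) ^ (-p)) atTop (nhds 0) := by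
    simpa using ((tendsto_rpow_neg_atTop hp).comp
      (tendsto_atTop_add_const_right _ 1 tendsto_natCast_atTop_atTop)).const_mul W
  exact squeeze_zero' (Eventually.of_forall hu0) (eventually_atTop.2 ⟨1, hu⟩) hlim

lemma le_mul_rpow_neg_of_forall_le {δ Tm B : ℝ} (hδ : δ ≤ 2) (hTm : 0 < Tm) {a α : ℕ → ℝ}
    (hα : ∀ j, 0 ≤ α j) (ha : ∀ j, 0 ≤ a j)
    (hstep : ∀ j : ℕ, ((j : ℝ) + 1) ^ (-1 + δ / 2) ≤ α j * Tm)
    (hsum : ∀ k, 2 * ∑ j ∈ range k, α j * a j ≤ B) {k i : ℕ} (hk : 1 ≤ k)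
    (hmin : ∀ j, 1 ≤ j → j ≤ k → a i ≤ a j) :
    a i ≤ Tm * B * ((k : ℝ) + 1) ^ (-(δ / 2)) := by
  have hweighted : a i * ∑ j ∈ Icc 1 k, α j ≤ ∑ j ∈ range (k + 1), α j * a j :=
    calc a i * ∑ j ∈ Icc 1 k, α j ≤ ∑ j ∈ Icc 1 k, α j * a j := by
          rw [mul_sum]
          refine sum_le_sum fun j hj => ?_
          rw [mul_comm]
          exact mul_le_mul_of_nonneg_left (hmin j (mem_Icc.1 hj).1 (mem_Icc.1 hj).2) (hα j)
      _ ≤ ∑ j ∈ range (k + 1), α j * a j :=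
          sum_le_sum_of_subset_of_nonneg
            (fun j hj => mem_range.2 (Nat.lt_succ_of_le (mem_Icc.1 hj).2))
            fun j _ _ => mul_nonneg (hα j) (ha j)
  have hsteps : ((k : ℝ) + 1) ^ (δ / 2) / 2 ≤ Tm * ∑ j ∈ Icc 1 k, α j :=
    calc ((k : ℝ) + 1) ^ (δ / 2) / 2 = ((k : ℝ) + 1) ^ (1 + (-1 + δ / 2)) / 2 := by ring_nf
      _ ≤ ∑ j ∈ Icc 1 k, ((j : ℝ) + 1) ^ (-1 + δ / 2) := rpow_div_two_le_sum_Icc (by linarith) hk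
      _ ≤ ∑ j ∈ Icc 1 k, α j * Tm := sum_le_sum fun j _ => hstep j
      _ = Tm * ∑ j ∈ Icc 1 k, α j := by rw [mul_sum]; simp_rw [mul_comm]
  rw [Real.rpow_neg (by positivity), ← div_eq_mul_inv, le_div_iff₀ (by positivity)]
  nlinarith [mul_le_mul_of_nonneg_left hsteps (ha i), mul_le_mul_of_nonneg_left hweighted hTm.le,
    hsum (k + 1)]

end Sequences

section Fejer

variable {E₁ E₂ E₃ : Type*} [NormedAddCommGroup E₁] [InnerProductSpace ℝ E₁]
  [NormedAddCommGroup E₂] [InnerProductSpace ℝ E₂] [NormedAddCommGroup E₃]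
  [InnerProductSpace ℝ E₃]

lemma exists_bound_dist_sq_of_normalized_steps {x T : ℕ → E₁} {y U : ℕ → E₂} {z V : ℕ → E₃}
    {xstar : E₁} {ystar : E₂} {zstar : E₃} {α γ N a : ℕ → ℝ} {δ : ℝ} (hδ : δ < 1)
    (hx : ∀ k, x (k + 1) = x k - α k • T k) (hy : ∀ k, y (k + 1) = y k + α k • U k)
    (hz : ∀ k, z (k + 1) = z k + α k • V k)
    (hN : ∀ k, N k = √(‖T k‖ ^ 2 + ‖U k‖ ^ 2 + ‖V k‖ ^ 2)) (hαN : ∀ k, α k * N k = γ k)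
    (hγ : ∀ k, γ k = ((k : ℝ) + 1) ^ (-1 + δ / 2))
    (ha : ∀ k, a k = ⟪T k, x k - xstar⟫ + ⟪-U k, y k - ystar⟫ + ⟪-V k, z k - zstar⟫)
    (hα : ∀ k, 0 ≤ α k) (ha0 : ∀ k, 0 ≤ a k) :
    ∃ B, (∀ k, ‖x k - xstar‖ ^ 2 + ‖y k - ystar‖ ^ 2 + ‖z k - zstar‖ ^ 2 ≤ B) ∧
      ∀ k, 2 * ∑ j ∈ range k, α j * a j ≤ B := by
  set D : ℕ → ℝ := fun k => ‖x k - xstar‖ ^ 2 + ‖y k - ystar‖ ^ 2 + ‖z k - zstar‖ ^ 2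
  have hrec : ∀ k, D (k + 1) = D k - 2 * (α k * a k) + γ k ^ 2 := fun k => by
    simp only [D, hx, hy, hz, norm_sub_smul_sub_sq, norm_add_smul_sub_sq, ha k, ← hαN k, hN k,
      inner_neg_left]
    rw [mul_pow, Real.sq_sqrt (by positivity)]
    ring
  have hγsq : ∀ k, γ k ^ 2 = ((k : ℝ) + 1) ^ (-2 + δ) := fun k => by
    rw [hγ k, ← Real.rpow_natCast, ← Real.rpow_mul (by positivity)]
    ring_nf
  have hsummable : Summable fun k => γ k ^ 2 := by
    simpa only [hγsq] using summable_nat_add_one_rpow (p := -2 + δ) (by linarith)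
  have htel := add_two_mul_sum_le_add_tsum hrec (fun k => sq_nonneg _) hsummable
  refine ⟨D 0 + ∑' k, γ k ^ 2, fun k => ?_, fun k => ?_⟩
  · have := sum_nonneg fun j (_ : j ∈ range k) => mul_nonneg (hα j) (ha0 j)
    linarith [htel k]
  · have : 0 ≤ D k := by positivity
    linarith [htel k]

end Fejer

section PDS

variable {n m l : ℕ}

lemma inner_mulVecE_transpose (A : Matrix (Fin l) (Fin n) ℝ) (v : EuclideanSpace ℝ (Fin l))
    (w : EuclideanSpace ℝ (Fin n)) : ⟪mulVecE Aᵀ v, w⟫ = ⟪v, mulVecE A w⟫ := by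
  rw [mulVecE, mulVecE, ← conjTranspose_eq_transpose_of_trivial,
    toEuclideanLin_conjTranspose_eq_adjoint, LinearMap.adjoint_inner_left]

lemma mulVecE_sub (A : Matrix (Fin l) (Fin n) ℝ) (x y : EuclideanSpace ℝ (Fin n)) :
    mulVecE A (x - y) = mulVecE A x - mulVecE A y :=
  map_sub _ x y

open scoped Matrix.Norms.L2Operator in
lemma norm_mulVecE_le (A : Matrix (Fin l) (Fin n) ℝ) (x : EuclideanSpace ℝ (Fin n)) :
    ‖mulVecE A x‖ ≤ ‖A‖ * ‖x‖ :=
  A.l2_opNorm_mulVec x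

lemma Fplus_apply_nonneg (f : Fin m → EuclideanSpace ℝ (Fin n) → ℝ)
    (x : EuclideanSpace ℝ (Fin n)) (i : Fin m) : 0 ≤ Fplus f x i :=
  le_max_right _ _

lemma Fplus_apply_le_inner {f : Fin m → EuclideanSpace ℝ (Fin n) → ℝ}
    {x xstar gi : EuclideanSpace ℝ (Fin n)} {i : Fin m} (hfeas : f i xstar ≤ 0)
    (hg : ⟪gi, xstar - x⟫ ≤ max (f i xstar) 0 - max (f i x) 0) :
    Fplus f x i ≤ ⟪gi, x - xstar⟫ := by
  rw [max_eq_right hfeas, ← neg_sub, inner_neg_right] at hg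
  change max (f i x) 0 ≤ _
  linarith

lemma norm_Fplus_le {f : Fin m → EuclideanSpace ℝ (Fin n) → ℝ}
    {g : Fin m → EuclideanSpace ℝ (Fin n)} {x xstar : EuclideanSpace ℝ (Fin n)} {M R : ℝ}
    (hfeas : ∀ i, f i xstar ≤ 0)
    (hg : ∀ i, ⟪g i, xstar - x⟫ ≤ max (f i xstar) 0 - max (f i x) 0)
    (hgM : ∀ i, ‖g i‖ ≤ M) (hxR : ‖x - xstar‖ ≤ R) : ‖Fplus f x‖ ≤ m * (M * R) := by
  refine (EuclideanSpace.norm_le_sum_abs _).trans ?_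
  calc ∑ i, |Fplus f x i| ≤ ∑ _i : Fin m, M * R := sum_le_sum fun i _ => by
        rw [abs_of_nonneg (Fplus_apply_nonneg f x i)]
        exact (Fplus_apply_le_inner (hfeas i) (hg i)).trans <| (real_inner_le_norm _ _).trans <|
          mul_le_mul (hgM i) hxR (norm_nonneg _) ((norm_nonneg _).trans (hgM i))
    _ = m * (M * R) := by simp

lemma lag_sub_add_penalty_le_inner {f0 : EuclideanSpace ℝ (Fin n) → ℝ}
    {f : Fin m → EuclideanSpace ℝ (Fin n) → ℝ} {A : Matrix (Fin l) (Fin n) ℝ}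
    {b : EuclideanSpace ℝ (Fin l)} {g0 : EuclideanSpace ℝ (Fin n) → EuclideanSpace ℝ (Fin n)}
    {g : Fin m → EuclideanSpace ℝ (Fin n) → EuclideanSpace ℝ (Fin n)}
    {xstar : EuclideanSpace ℝ (Fin n)} {lamstar : EuclideanSpace ℝ (Fin m)}
    {nustar : EuclideanSpace ℝ (Fin l)} {pstar s ρ : ℝ}
    (hxfeas : ∀ i, f i xstar ≤ 0) (hxeq : mulVecE A xstar = b) (hxval : f0 xstar = pstar)
    (hg0 : ∀ x y, ⟪g0 x, y - x⟫ ≤ f0 y - f0 x)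
    (hg : ∀ i x y, ⟪g i x, y - x⟫ ≤ max (f i y) 0 - max (f i x) 0) (hs : 0 < s) (hρ : 0 ≤ ρ)
    {x : EuclideanSpace ℝ (Fin n)} {lam ϱ : EuclideanSpace ℝ (Fin m)}
    {nu ς : EuclideanSpace ℝ (Fin l)} {T : EuclideanSpace ℝ (Fin n)} (hlam : ∀ i, 0 ≤ lam i)
    (hϱ : ϱ = gradNormRpow s (Fplus f x)) (hς : ς = gradNormRpow s (mulVecE A x - b))
    (hT : T = g0 x + (∑ i, (lam i + ρ * ϱ i) • g i x) + mulVecE Aᵀ (nu + ρ • ς)) :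
    Lag f0 f A b x lamstar nustar - pstar
        + ρ * (s * (‖Fplus f x‖ ^ s + ‖mulVecE A x - b‖ ^ s))
      ≤ ⟪T, x - xstar⟫ + ⟪-(Fplus f x), lam - lamstar⟫
        + ⟪-(mulVecE A x - b), nu - nustar⟫ := by
  subst hT hϱ hς
  have hobj : f0 x - pstar ≤ ⟪g0 x, x - xstar⟫ := by
    have := hg0 x xstar
    rw [← neg_sub, inner_neg_right] at this
    linarith
  have hineq : ⟪lam, Fplus f x⟫ + ρ * (s * ‖Fplus f x‖ ^ s)
      ≤ ⟪∑ i, (lam i + ρ * gradNormRpow s (Fplus f x) i) • g i x, x - xstar⟫ := by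
    refine le_of_eq_of_le ?_ (sum_mul_sub_le_inner_sum_smul (φ := fun i y => max (f i y) 0)
      (fun i => add_nonneg (hlam i) (mul_nonneg hρ
        (gradNormRpow_apply_nonneg hs.le (Fplus_apply_nonneg f x) i))) fun i => hg i x xstar)
    simp only [max_eq_right (hxfeas _), sub_zero]
    rw [← inner_gradNormRpow_self hs, ← real_inner_smul_left, ← inner_add_left, PiLp.inner_apply]
    simp [Fplus, mul_comm]
  have hpen : ⟪mulVecE Aᵀ (nu + ρ • gradNormRpow s (mulVecE A x - b)), x - xstar⟫
      = ⟪nu, mulVecE A x - b⟫ + ρ * (s * ‖mulVecE A x - b‖ ^ s) := by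
    rw [inner_mulVecE_transpose, mulVecE_sub, hxeq, inner_add_left, real_inner_smul_left,
      inner_gradNormRpow_self hs]
  have hdual : ∀ {k : ℕ} (v w wstar : EuclideanSpace ℝ (Fin k)),
      ⟪-v, w - wstar⟫ = ⟪wstar, v⟫ - ⟪w, v⟫ := fun v w wstar => by
    rw [inner_neg_left, inner_sub_right, real_inner_comm v, real_inner_comm v]
    ring
  rw [Lag, inner_add_left, inner_add_left, hpen, hdual, hdual]
  linarith

open scoped Matrix.Norms.L2Operator in
lemma exists_pdsDirection_norm_le {f : Fin m → EuclideanSpace ℝ (Fin n) → ℝ}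
    {A : Matrix (Fin l) (Fin n) ℝ} {b : EuclideanSpace ℝ (Fin l)}
    {g0 : EuclideanSpace ℝ (Fin n) → EuclideanSpace ℝ (Fin n)}
    {g : Fin m → EuclideanSpace ℝ (Fin n) → EuclideanSpace ℝ (Fin n)}
    {xstar : EuclideanSpace ℝ (Fin n)} {lamstar : EuclideanSpace ℝ (Fin m)}
    {nustar : EuclideanSpace ℝ (Fin l)} {s ρ : ℝ}
    (hxfeas : ∀ i, f i xstar ≤ 0) (hxeq : mulVecE A xstar = b)
    (hg : ∀ i x y, ⟪g i x, y - x⟫ ≤ max (f i y) 0 - max (f i x) 0)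
    (hbdd : ∀ B : Set (EuclideanSpace ℝ (Fin n)), Bornology.IsBounded B →
      ∃ M : ℝ, ∀ x ∈ B, ‖g0 x‖ ≤ M ∧ ∀ i, ‖g i x‖ ≤ M)
    (hs1 : 1 ≤ s) (hs2 : s ≤ 2) (hρ : 0 ≤ ρ) (R : ℝ) :
    ∃ C, ∀ (x : EuclideanSpace ℝ (Fin n)) (lam ϱ : EuclideanSpace ℝ (Fin m))
      (nu ς : EuclideanSpace ℝ (Fin l)) (T : EuclideanSpace ℝ (Fin n)),
      ‖x - xstar‖ ≤ R → ‖lam - lamstar‖ ≤ R → ‖nu - nustar‖ ≤ R →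
      ϱ = gradNormRpow s (Fplus f x) → ς = gradNormRpow s (mulVecE A x - b) →
      T = g0 x + (∑ i, (lam i + ρ * ϱ i) • g i x) + mulVecE Aᵀ (nu + ρ • ς) →
      √(‖T‖ ^ 2 + ‖Fplus f x‖ ^ 2 + ‖mulVecE A x - b‖ ^ 2) ≤ C := by
  obtain ⟨M₀, hM₀⟩ := hbdd _ (Metric.isBounded_closedBall (x := xstar) (r := R))
  set M := max M₀ 0
  set Φ := m * (M * R)
  set H := ‖A‖ * R
  set Λ := ‖lamstar‖ + R
  set N := ‖nustar‖ + R
  refine ⟨M + m * ((Λ + ρ * (s * (1 + Φ))) * M) + ‖Aᵀ‖ * (N + ρ * (s * (1 + H))) + Φ + H, ?_⟩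
  rintro x lam ϱ nu ς T hx hlam hnu rfl rfl rfl
  replace hlam : ‖lam‖ ≤ Λ := (norm_le_norm_sub_add lam lamstar).trans (by linarith)
  replace hnu : ‖nu‖ ≤ N := (norm_le_norm_sub_add nu nustar).trans (by linarith)
  have hmem : x ∈ Metric.closedBall xstar R := by rwa [Metric.mem_closedBall, dist_eq_norm]
  have hg0M : ‖g0 x‖ ≤ M := (hM₀ x hmem).1.trans (le_max_left _ _)
  have hgM : ∀ i, ‖g i x‖ ≤ M := fun i => ((hM₀ x hmem).2 i).trans (le_max_left _ _)
  have hF : ‖Fplus f x‖ ≤ Φ := norm_Fplus_le hxfeas (fun i => hg i x xstar) hgM hx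
  have hh : ‖mulVecE A x - b‖ ≤ H := by
    rw [← hxeq, ← mulVecE_sub]
    exact (norm_mulVecE_le A _).trans (mul_le_mul_of_nonneg_left hx (norm_nonneg _))
  have hpen : ∀ {k : ℕ} {v : EuclideanSpace ℝ (Fin k)} {c : ℝ}, ‖v‖ ≤ c →
      ‖ρ • gradNormRpow s v‖ ≤ ρ * (s * (1 + c)) := fun {k v c} hv => by
    rw [norm_smul, Real.norm_of_nonneg hρ]
    refine mul_le_mul_of_nonneg_left ((norm_gradNormRpow_le hs1 hs2 v).trans ?_) hρ
    exact mul_le_mul_of_nonneg_left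
      (max_le (by linarith [(norm_nonneg v).trans hv]) (by linarith [norm_nonneg v])) (by linarith)
  have hsum : ‖∑ i, (lam i + ρ * gradNormRpow s (Fplus f x) i) • g i x‖
      ≤ m * ((Λ + ρ * (s * (1 + Φ))) * M) := by
    have hc := norm_sum_smul_le (lam + ρ • gradNormRpow s (Fplus f x)) hgM
    simp only [PiLp.add_apply, PiLp.smul_apply, smul_eq_mul, Fintype.card_fin] at hc
    refine hc.trans (mul_le_mul_of_nonneg_left (mul_le_mul_of_nonneg_right ?_ ?_) (by positivity))
    · exact (norm_add_le _ _).trans (add_le_add hlam (hpen hF))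
    · exact (norm_nonneg _).trans hg0M
  have hdual : ‖mulVecE Aᵀ (nu + ρ • gradNormRpow s (mulVecE A x - b))‖
      ≤ ‖Aᵀ‖ * (N + ρ * (s * (1 + H))) :=
    (norm_mulVecE_le _ _).trans (mul_le_mul_of_nonneg_left
      ((norm_add_le _ _).trans (add_le_add hnu (hpen hh))) (norm_nonneg _))
  refine (sqrt_sq_add_sq_add_sq_le_add (norm_nonneg _) (norm_nonneg _) (norm_nonneg _)).trans ?_
  have hT₁ := norm_add_le (g0 x + ∑ i, (lam i + ρ * gradNormRpow s (Fplus f x) i) • g i x)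
    (mulVecE Aᵀ (nu + ρ • gradNormRpow s (mulVecE A x - b)))
  have hT₂ := norm_add_le (g0 x) (∑ i, (lam i + ρ * gradNormRpow s (Fplus f x) i) • g i x)
  linarith

lemma exists_error_le_of_penalized_gap_le {f0 : EuclideanSpace ℝ (Fin n) → ℝ}
    {f : Fin m → EuclideanSpace ℝ (Fin n) → ℝ} {A : Matrix (Fin l) (Fin n) ℝ}
    {b : EuclideanSpace ℝ (Fin l)} {lamstar : EuclideanSpace ℝ (Fin m)}
    {nustar : EuclideanSpace ℝ (Fin l)} {pstar s ρ δ C : ℝ}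
    (hs1 : 1 ≤ s) (hρ : 0 < ρ) (hδ : 0 ≤ δ) (hC : 0 ≤ C) :
    ∃ W > 0, ∀ (x : EuclideanSpace ℝ (Fin n)) (r : ℝ), 1 ≤ r →
      pstar ≤ Lag f0 f A b x lamstar nustar →
      Lag f0 f A b x lamstar nustar - pstar
          + ρ * (s * (‖Fplus f x‖ ^ s + ‖mulVecE A x - b‖ ^ s)) ≤ C * r ^ (-(δ / 2)) →
      |f0 x - pstar| ≤ W * r ^ (-(δ / (2 * s))) ∧
        ‖Fplus f x‖ + ‖mulVecE A x - b‖ ≤ W * r ^ (-(δ / (2 * s))) := by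
  have hs : 0 < s := one_pos.trans_le hs1
  set K := (C / (ρ * s)) ^ s⁻¹
  refine ⟨C + (‖lamstar‖ + ‖nustar‖ + 2) * K + 1, by positivity, ?_⟩
  intro x r hr hsaddle hkey
  set v := r ^ (-(δ / (2 * s)))
  have hv : 0 ≤ v := by positivity
  have hCv : C * r ^ (-(δ / 2)) ≤ C * v := by
    refine mul_le_mul_of_nonneg_left (Real.rpow_le_rpow_of_exponent_le hr ?_) hC
    exact neg_le_neg (div_le_div_of_nonneg_left hδ two_pos (by linarith))
  have hroot : ∀ t : ℝ, 0 ≤ t → ρ * (s * t ^ s) ≤ C * r ^ (-(δ / 2)) → t ≤ K * v := by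
    intro t ht h
    have := le_mul_rpow_neg_of_rpow_le (c := C / (ρ * s)) (r := r) (e := δ / 2) ht
      (by positivity) (by linarith) hs
      (by rw [div_mul_eq_mul_div, le_div_iff₀ (by positivity)]; linarith)
    rwa [div_div] at this
  have hpen : ρ * (s * (‖Fplus f x‖ ^ s + ‖mulVecE A x - b‖ ^ s))
      = ρ * (s * ‖Fplus f x‖ ^ s) + ρ * (s * ‖mulVecE A x - b‖ ^ s) := by ring
  have hpenF : 0 ≤ ρ * (s * ‖Fplus f x‖ ^ s) := by positivity
  have hpenh : 0 ≤ ρ * (s * ‖mulVecE A x - b‖ ^ s) := by positivity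
  have hF := hroot ‖Fplus f x‖ (norm_nonneg _) (by linarith)
  have hh := hroot ‖mulVecE A x - b‖ (norm_nonneg _) (by linarith)
  have hLag : Lag f0 f A b x lamstar nustar
      = f0 x + ⟪lamstar, Fplus f x⟫ + ⟪nustar, mulVecE A x - b⟫ := rfl
  have hlamF := abs_le.1 ((abs_real_inner_le_norm lamstar (Fplus f x)).trans
    (mul_le_mul_of_nonneg_left hF (norm_nonneg _)))
  have hnuh := abs_le.1 ((abs_real_inner_le_norm nustar (mulVecE A x - b)).trans
    (mul_le_mul_of_nonneg_left hh (norm_nonneg _)))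
  have hW : (C + (‖lamstar‖ + ‖nustar‖ + 2) * K + 1) * v
      = C * v + ‖lamstar‖ * (K * v) + ‖nustar‖ * (K * v) + 2 * (K * v) + v := by ring
  have hKv : 0 ≤ K * v := by positivity
  rw [hW]
  refine ⟨abs_le.2 ⟨?_, ?_⟩, ?_⟩ <;> linarith

end PDS

theorem pds_argmin_convergence_general
    (n m l : ℕ)
    (f0 : EuclideanSpace ℝ (Fin n) → ℝ)
    (f : Fin m → EuclideanSpace ℝ (Fin n) → ℝ)
    (A : Matrix (Fin l) (Fin n) ℝ) (b : EuclideanSpace ℝ (Fin l))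
    (pstar : ℝ)
    (xstar : EuclideanSpace ℝ (Fin n))
    (lamstar : EuclideanSpace ℝ (Fin m)) (nustar : EuclideanSpace ℝ (Fin l))
    -- x* is primal optimal with value p*
    (hxfeas : ∀ i, f i xstar ≤ 0) (hxeq : mulVecE A xstar = b)
    (hxval : f0 xstar = pstar)
    -- saddle-point assumption
    (hsaddle2 : ∀ x, pstar ≤ Lag f0 f A b x lamstar nustar)
    -- parameters s ∈ [1,2], ρ > 0, δ ∈ (0,1)
    (s ρ δ : ℝ) (hs1 : 1 ≤ s) (hs2 : s ≤ 2) (hρ : 0 < ρ)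
    (hδ0 : 0 < δ) (hδ1 : δ < 1)
    -- fixed subgradient selections g₀(x) ∈ ∂f₀(x), gᵢ(x) ∈ ∂Fᵢ(x),
    -- bounded in norm on every bounded subset of ℝⁿ
    (g0 : EuclideanSpace ℝ (Fin n) → EuclideanSpace ℝ (Fin n))
    (hg0 : ∀ x y, ⟪g0 x, y - x⟫ ≤ f0 y - f0 x)
    (g : Fin m → EuclideanSpace ℝ (Fin n) → EuclideanSpace ℝ (Fin n))
    (hg : ∀ i x y, ⟪g i x, y - x⟫ ≤ max (f i y) 0 - max (f i x) 0)
    (hbdd : ∀ B : Set (EuclideanSpace ℝ (Fin n)), Bornology.IsBounded B →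
      ∃ M : ℝ, ∀ x ∈ B, ‖g0 x‖ ≤ M ∧ ∀ i, ‖g i x‖ ≤ M)
    -- the PDS iterates z⁽ᵏ⁾ = (x⁽ᵏ⁾, λ⁽ᵏ⁾, ν⁽ᵏ⁾)
    (xk : ℕ → EuclideanSpace ℝ (Fin n))
    (lamk : ℕ → EuclideanSpace ℝ (Fin m))
    (nuk : ℕ → EuclideanSpace ℝ (Fin l))
    (hlam0 : ∀ i, 0 ≤ lamk 0 i)
    -- the penalty terms ϱ⁽ᵏ⁾ and ς⁽ᵏ⁾
    (ϱ : ℕ → EuclideanSpace ℝ (Fin m))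
    (hϱ : ∀ k, ϱ k = if Fplus f (xk k) ≠ 0 then
      (s * ‖Fplus f (xk k)‖ ^ (s - 2)) • Fplus f (xk k) else 0)
    (ς : ℕ → EuclideanSpace ℝ (Fin l))
    (hς : ∀ k, ς k = if mulVecE A (xk k) ≠ b then
      (s * ‖mulVecE A (xk k) - b‖ ^ (s - 2)) • (mulVecE A (xk k) - b) else 0)
    -- T⁽ᵏ⁾: primal component Tx k and total Euclidean norm nT k
    (Tx : ℕ → EuclideanSpace ℝ (Fin n))
    (hTx : ∀ k, Tx k = g0 (xk k)
      + (∑ i, (lamk k i + ρ * ϱ k i) • g i (xk k))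
      + mulVecE Aᵀ (nuk k + ρ • ς k))
    (nT : ℕ → ℝ)
    (hnT : ∀ k, nT k = Real.sqrt (‖Tx k‖ ^ 2 + ‖Fplus f (xk k)‖ ^ 2
      + ‖mulVecE A (xk k) - b‖ ^ 2))
    -- T⁽ᵏ⁾ ≠ 0
    (hTne : ∀ k, ¬ (Tx k = 0 ∧ Fplus f (xk k) = 0 ∧ mulVecE A (xk k) - b = 0))
    -- step sizes αₖ = γₖ/‖T⁽ᵏ⁾‖₂ with γₖ = (k+1)^(-1+δ/2)
    (γ α : ℕ → ℝ)
    (hγ : ∀ k, γ k = ((k : ℝ) + 1) ^ (-1 + δ / 2))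
    (hα : ∀ k, α k = γ k / nT k)
    -- the update z⁽ᵏ⁺¹⁾ = z⁽ᵏ⁾ - αₖ T⁽ᵏ⁾
    (hxk : ∀ k, xk (k + 1) = xk k - α k • Tx k)
    (hlamk : ∀ k, lamk (k + 1) = lamk k + α k • Fplus f (xk k))
    (hnuk : ∀ k, nuk (k + 1) = nuk k + α k • (mulVecE A (xk k) - b))
    -- ⟨T⁽ʲ⁾, z⁽ʲ⁾ - z*⟩
    (iT : ℕ → ℝ)
    (hiT : ∀ j, iT j = ⟪Tx j, xk j - xstar⟫
      + ⟪-(Fplus f (xk j)), lamk j - lamstar⟫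
      + ⟪-(mulVecE A (xk j) - b), nuk j - nustar⟫)
    -- i_k ∈ argmin_{1 ≤ i ≤ k} ⟨T⁽ⁱ⁾, z⁽ⁱ⁾ - z*⟩
    (ik : ℕ → ℕ)
    (hik : ∀ k, 1 ≤ k → 1 ≤ ik k ∧ ik k ≤ k ∧
      ∀ i, 1 ≤ i → i ≤ k → iT (ik k) ≤ iT i) :
    ∃ W : ℝ, 0 < W ∧
      (∀ k : ℕ, 1 ≤ k →
        |f0 (xk (ik k)) - pstar| ≤ W * ((k : ℝ) + 1) ^ (-(δ / (2 * s))) ∧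
        ‖Fplus f (xk (ik k))‖ + ‖mulVecE A (xk (ik k)) - b‖
          ≤ W * ((k : ℝ) + 1) ^ (-(δ / (2 * s)))) ∧
      Filter.Tendsto (fun k => |f0 (xk (ik k)) - pstar|)
        Filter.atTop (nhds 0) ∧
      Filter.Tendsto (fun k => ‖Fplus f (xk (ik k))‖ + ‖mulVecE A (xk (ik k)) - b‖)
        Filter.atTop (nhds 0) := by
  have hs0 : 0 < s := one_pos.trans_le hs1
  have hϱ' : ∀ k, ϱ k = gradNormRpow s (Fplus f (xk k)) := fun k => by
    rw [hϱ k, gradNormRpow]; congr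
  have hς' : ∀ k, ς k = gradNormRpow s (mulVecE A (xk k) - b) := fun k => by
    simp only [hς k, gradNormRpow, sub_ne_zero]
  have hnTpos : ∀ k, 0 < nT k := fun k => by
    rw [hnT k, Real.sqrt_pos]
    exact norm_sq_add_norm_sq_add_norm_sq_pos (hTne k)
  have hαnT : ∀ k, α k * nT k = γ k := fun k => by rw [hα k, div_mul_cancel₀ _ (hnTpos k).ne']
  have hα0 : ∀ k, 0 ≤ α k := fun k => by
    rw [hα k, hγ k]
    exact div_nonneg (by positivity) (hnTpos k).le
  have hlam : ∀ k i, 0 ≤ lamk k i :=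
    apply_nonneg_of_eq_add_smul hlamk hlam0 hα0 fun k => Fplus_apply_nonneg f (xk k)
  have hkey : ∀ k, Lag f0 f A b (xk k) lamstar nustar - pstar
      + ρ * (s * (‖Fplus f (xk k)‖ ^ s + ‖mulVecE A (xk k) - b‖ ^ s)) ≤ iT k := fun k =>
    hiT k ▸ lag_sub_add_penalty_le_inner hxfeas hxeq hxval hg0 hg hs0 hρ.le (hlam k) (hϱ' k)
      (hς' k) (hTx k)
  have hiT0 : ∀ k, 0 ≤ iT k := fun k => by
    have := hsaddle2 (xk k)
    have : 0 ≤ ρ * (s * (‖Fplus f (xk k)‖ ^ s + ‖mulVecE A (xk k) - b‖ ^ s)) := by positivity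
    linarith [hkey k]
  obtain ⟨B, hDB, hsum⟩ := exists_bound_dist_sq_of_normalized_steps hδ1 hxk hlamk hnuk hnT hαnT
    hγ hiT hα0 hiT0
  obtain ⟨Tm, hTm⟩ := exists_pdsDirection_norm_le (lamstar := lamstar) (nustar := nustar)
    hxfeas hxeq hg hbdd hs1 hs2 hρ.le √B
  have hnTle : ∀ k, nT k ≤ Tm := fun k => by
    obtain ⟨hx, hy, hz⟩ := le_sqrt_of_sq_add_sq_add_sq_le (hDB k)
    exact hnT k ▸ hTm _ _ _ _ _ _ hx hy hz (hϱ' k) (hς' k) (hTx k)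
  have hTm0 : 0 < Tm := (hnTpos 0).trans_le (hnTle 0)
  have hB : 0 ≤ B := le_trans (by positivity) (hDB 0)
  have hrate : ∀ k, 1 ≤ k → iT (ik k) ≤ Tm * B * ((k : ℝ) + 1) ^ (-(δ / 2)) := fun k hk =>
    le_mul_rpow_neg_of_forall_le (by linarith) hTm0 hα0 hiT0
      (fun j => hγ j ▸ hαnT j ▸ mul_le_mul_of_nonneg_left (hnTle j) (hα0 j)) hsum hk
      (hik k hk).2.2
  obtain ⟨W, hW, hWle⟩ := exists_error_le_of_penalized_gap_le (b := b) hs1 hρ hδ0.le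
    (mul_nonneg hTm0.le hB)
  have hbound : ∀ k : ℕ, 1 ≤ k →
      |f0 (xk (ik k)) - pstar| ≤ W * ((k : ℝ) + 1) ^ (-(δ / (2 * s))) ∧
      ‖Fplus f (xk (ik k))‖ + ‖mulVecE A (xk (ik k)) - b‖
        ≤ W * ((k : ℝ) + 1) ^ (-(δ / (2 * s))) := fun k hk =>
    hWle _ _ (by linarith [(k.cast_nonneg : (0 : ℝ) ≤ k)]) (hsaddle2 _)
      ((hkey _).trans (hrate k hk))
  exact ⟨W, hW, hbound,
    tendsto_zero_of_le_mul_rpow_neg (by positivity) (fun _ => abs_nonneg _)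
      fun k hk => (hbound k hk).1,
    tendsto_zero_of_le_mul_rpow_neg (by positivity) (fun _ => by positivity)
      fun k hk => (hbound k hk).2⟩

/-- PDS convergence lemma along the argmin subsequence `i_k`. -/
theorem pds_argmin_convergence
    (n m l : ℕ)
    (f0 : EuclideanSpace ℝ (Fin n) → ℝ)
    (f : Fin m → EuclideanSpace ℝ (Fin n) → ℝ)
    (hf0 : ConvexOn ℝ Set.univ f0)
    (hf : ∀ i, ConvexOn ℝ Set.univ (f i))
    (A : Matrix (Fin l) (Fin n) ℝ) (b : EuclideanSpace ℝ (Fin l))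
    (pstar : ℝ)
    (xstar : EuclideanSpace ℝ (Fin n))
    (lamstar : EuclideanSpace ℝ (Fin m)) (nustar : EuclideanSpace ℝ (Fin l))
    -- x* is primal optimal with value p*
    (hxfeas : ∀ i, f i xstar ≤ 0) (hxeq : mulVecE A xstar = b)
    (hxval : f0 xstar = pstar)
    -- saddle-point assumption
    (hlamstar : ∀ i, 0 ≤ lamstar i)
    (hsaddle_eq : Lag f0 f A b xstar lamstar nustar = pstar)
    (hsaddle1 : ∀ (lam : EuclideanSpace ℝ (Fin m)) (nu : EuclideanSpace ℝ (Fin l)),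
      (∀ i, 0 ≤ lam i) → Lag f0 f A b xstar lam nu ≤ pstar)
    (hsaddle2 : ∀ x, pstar ≤ Lag f0 f A b x lamstar nustar)
    -- parameters s ∈ [1,2], ρ > 0, δ ∈ (0,1)
    (s ρ δ : ℝ) (hs1 : 1 ≤ s) (hs2 : s ≤ 2) (hρ : 0 < ρ)
    (hδ0 : 0 < δ) (hδ1 : δ < 1)
    -- fixed subgradient selections g₀(x) ∈ ∂f₀(x), gᵢ(x) ∈ ∂Fᵢ(x),
    -- bounded in norm on every bounded subset of ℝⁿ
    (g0 : EuclideanSpace ℝ (Fin n) → EuclideanSpace ℝ (Fin n))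
    (hg0 : ∀ x y, ⟪g0 x, y - x⟫ ≤ f0 y - f0 x)
    (g : Fin m → EuclideanSpace ℝ (Fin n) → EuclideanSpace ℝ (Fin n))
    (hg : ∀ i x y, ⟪g i x, y - x⟫ ≤ max (f i y) 0 - max (f i x) 0)
    (hbdd : ∀ B : Set (EuclideanSpace ℝ (Fin n)), Bornology.IsBounded B →
      ∃ M : ℝ, ∀ x ∈ B, ‖g0 x‖ ≤ M ∧ ∀ i, ‖g i x‖ ≤ M)
    -- the PDS iterates z⁽ᵏ⁾ = (x⁽ᵏ⁾, λ⁽ᵏ⁾, ν⁽ᵏ⁾)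
    (xk : ℕ → EuclideanSpace ℝ (Fin n))
    (lamk : ℕ → EuclideanSpace ℝ (Fin m))
    (nuk : ℕ → EuclideanSpace ℝ (Fin l))
    (hlam0 : ∀ i, 0 ≤ lamk 0 i)
    -- the penalty terms ϱ⁽ᵏ⁾ and ς⁽ᵏ⁾
    (ϱ : ℕ → EuclideanSpace ℝ (Fin m))
    (hϱ : ∀ k, ϱ k = if Fplus f (xk k) ≠ 0 then
      (s * ‖Fplus f (xk k)‖ ^ (s - 2)) • Fplus f (xk k) else 0)
    (ς : ℕ → EuclideanSpace ℝ (Fin l))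
    (hς : ∀ k, ς k = if mulVecE A (xk k) ≠ b then
      (s * ‖mulVecE A (xk k) - b‖ ^ (s - 2)) • (mulVecE A (xk k) - b) else 0)
    -- T⁽ᵏ⁾: primal component Tx k and total Euclidean norm nT k
    (Tx : ℕ → EuclideanSpace ℝ (Fin n))
    (hTx : ∀ k, Tx k = g0 (xk k)
      + (∑ i, (lamk k i + ρ * ϱ k i) • g i (xk k))
      + mulVecE Aᵀ (nuk k + ρ • ς k))
    (nT : ℕ → ℝ)
    (hnT : ∀ k, nT k = Real.sqrt (‖Tx k‖ ^ 2 + ‖Fplus f (xk k)‖ ^ 2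
      + ‖mulVecE A (xk k) - b‖ ^ 2))
    -- T⁽ᵏ⁾ ≠ 0
    (hTne : ∀ k, ¬ (Tx k = 0 ∧ Fplus f (xk k) = 0 ∧ mulVecE A (xk k) - b = 0))
    -- step sizes αₖ = γₖ/‖T⁽ᵏ⁾‖₂ with γₖ = (k+1)^(-1+δ/2)
    (γ α : ℕ → ℝ)
    (hγ : ∀ k, γ k = ((k : ℝ) + 1) ^ (-1 + δ / 2))
    (hα : ∀ k, α k = γ k / nT k)
    -- the update z⁽ᵏ⁺¹⁾ = z⁽ᵏ⁾ - αₖ T⁽ᵏ⁾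
    (hxk : ∀ k, xk (k + 1) = xk k - α k • Tx k)
    (hlamk : ∀ k, lamk (k + 1) = lamk k + α k • Fplus f (xk k))
    (hnuk : ∀ k, nuk (k + 1) = nuk k + α k • (mulVecE A (xk k) - b))
    -- ⟨T⁽ʲ⁾, z⁽ʲ⁾ - z*⟩
    (iT : ℕ → ℝ)
    (hiT : ∀ j, iT j = ⟪Tx j, xk j - xstar⟫
      + ⟪-(Fplus f (xk j)), lamk j - lamstar⟫
      + ⟪-(mulVecE A (xk j) - b), nuk j - nustar⟫)
    -- i_k ∈ argmin_{1 ≤ i ≤ k} ⟨T⁽ⁱ⁾, z⁽ⁱ⁾ - z*⟩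
    (ik : ℕ → ℕ)
    (hik : ∀ k, 1 ≤ k → 1 ≤ ik k ∧ ik k ≤ k ∧
      ∀ i, 1 ≤ i → i ≤ k → iT (ik k) ≤ iT i) :
    ∃ W : ℝ, 0 < W ∧
      (∀ k : ℕ, 1 ≤ k →
        |f0 (xk (ik k)) - pstar| ≤ W * ((k : ℝ) + 1) ^ (-(δ / (2 * s))) ∧
        ‖Fplus f (xk (ik k))‖ + ‖mulVecE A (xk (ik k)) - b‖
          ≤ W * ((k : ℝ) + 1) ^ (-(δ / (2 * s)))) ∧
      Filter.Tendsto (fun k => |f0 (xk (ik k)) - pstar|)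
        Filter.atTop (nhds 0) ∧
      Filter.Tendsto (fun k => ‖Fplus f (xk (ik k))‖ + ‖mulVecE A (xk (ik k)) - b‖)
        Filter.atTop (nhds 0) :=
  pds_argmin_convergence_general n m l f0 f A b pstar xstar lamstar nustar hxfeas hxeq hxval
    hsaddle2 s ρ δ hs1 hs2 hρ hδ0 hδ1 g0 hg0 g hg hbdd xk lamk nuk hlam0 ϱ hϱ ς hς Tx hTx nT hnT
    hTne γ α hγ hα hxk hlamk hnuk iT hiT ik hik
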